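/- arXiv:2208.11828 — 5 statements merged into one kernel-verified Lean document; each statement's English description precedes it below -/
import Mathlib

section
/- Let $y_{t+h} = \sum_{s=1}^{S} \theta_{h,ys}\varepsilon_{s,t} + u_{t+h}$ and $x_t = \sum_{s=1}^{S} \theta_{0,xs}\varepsilon_{s,t} + v_t$ where $z_t$ is a random variable with $E[z_t u_{t+h}] = E[z_t v_t] = 0$, $E[z_t \varepsilon_{s,t}] = \alpha_s$, and $\theta_{0,xs} = 1$ for all $s$ (unit effect normalization). If $\sum_{s=1}^{S}\alpha_s \neq 0$, then $\mathrm{Cov}(y_{t+h}, z_t)/\mathrm{Cov}(x_t, z_t) = \sum_{s=1}^{S} w_s \theta_{h,ys}$ where $w_s = \alpha_s / \sum_{s'=1}^{S}\alpha_{s'}$, and the weights satisfy $\sum_{s=1}^{S} w_s = 1$. -/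
open MeasureTheory Finset

theorem stmt0 {Ω : Type*} [MeasurableSpace Ω] (μ : Measure Ω) [IsProbabilityMeasure μ]
    (S : ℕ) (hS : 0 < S)
    (ε : Fin S → Ω → ℝ) (z u v : Ω → ℝ) (θ α : Fin S → ℝ)
    (y x : Ω → ℝ)
    (hy : ∀ ω, y ω = ∑ s, θ s * ε s ω + u ω)
    (hx : ∀ ω, x ω = ∑ s, ε s ω + v ω)
    (hzu : ∫ ω, z ω * u ω ∂μ = 0)
    (hzv : ∫ ω, z ω * v ω ∂μ = 0)
    (hzε : ∀ s, ∫ ω, z ω * ε s ω ∂μ = α s)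
    (hint_u : Integrable (fun ω => z ω * u ω) μ)
    (hint_v : Integrable (fun ω => z ω * v ω) μ)
    (hint_ε : ∀ s, Integrable (fun ω => z ω * ε s ω) μ)
    (hα : ∑ s, α s ≠ 0) :
    (∫ ω, y ω * z ω ∂μ) / (∫ ω, x ω * z ω ∂μ) = ∑ s, (α s / ∑ s', α s') * θ s ∧
      ∑ s, α s / ∑ s', α s' = 1 := by
  have hyz : (∫ ω, y ω * z ω ∂μ) = ∑ s, θ s * α s := by
    have h1 : (fun ω => y ω * z ω) = fun ω => (∑ s, θ s * (z ω * ε s ω)) + z ω * u ω := by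
      funext ω; rw [hy ω, add_mul, Finset.sum_mul]
      congr 1
      exact Finset.sum_congr rfl (fun s _ => by ring)
      ring
    rw [h1, integral_add (by
        apply integrable_finset_sum
        intro s _
        exact (hint_ε s).const_mul (θ s)) hint_u,
      integral_finset_sum _ (fun s _ => (hint_ε s).const_mul (θ s)), hzu, add_zero]
    exact Finset.sum_congr rfl (fun s _ => by rw [MeasureTheory.integral_const_mul, hzε s])
  have hxz : (∫ ω, x ω * z ω ∂μ) = ∑ s, α s := by
    have h1 : (fun ω => x ω * z ω) = fun ω => (∑ s, z ω * ε s ω) + z ω * v ω := by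
      funext ω; rw [hx ω]
      rw [add_mul, Finset.sum_mul]
      congr 1
      · exact Finset.sum_congr rfl (fun s _ => by ring)
      · ring
    rw [h1, integral_add (integrable_finset_sum _ (fun s _ => hint_ε s)) hint_v,
      integral_finset_sum _ (fun s _ => hint_ε s), hzv, add_zero]
    exact Finset.sum_congr rfl (fun s _ => hzε s)
  constructor
  · rw [hyz, hxz, Finset.sum_div]
    exact Finset.sum_congr rfl (fun s _ => by field_simp)
  · rw [← Finset.sum_div, div_self hα]
end

section
/- Let $\boldsymbol{e}_t = (\varepsilon_{1,t},\dots,\varepsilon_{S,t})'$ be a discrete random vector, $\xi_t = \sum_{s=1}^S \varepsilon_{s,t}$ with $P(\xi_t = 1) > 0$ and $P(\boldsymbol{e}_t = \boldsymbol{0}) > 0$, and suppose $E[y_{t+h} \mid \boldsymbol{e}_t = \boldsymbol{a}] = \boldsymbol{a}'\boldsymbol{\theta}_{h,y} + c$ for all realizations $\boldsymbol{a}$ of $\boldsymbol{e}_t$, for some vector $\boldsymbol{\theta}_{h,y} \in \mathbb{R}^S$ and constant $c$. Then $E[y_{t+h} \mid \xi_t = 1] - E[y_{t+h} \mid \xi_t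 = 0,\, \boldsymbol{e}_t = \boldsymbol{0}] = E[\boldsymbol{e}_t \mid \xi_t = 1]'\boldsymbol{\theta}_{h,y}$, a weighted combination of the componentwise impulse responses with weights given by the conditional means of the components. -/
open scoped Classical

theorem stmt4 {ι : Type*} [Fintype ι] (S : ℕ)
    (p : ι → ℝ) (hp : ∀ i, 0 ≤ p i) (hp1 : ∑ i, p i = 1)
    (e : ι → Fin S → ℝ) (g : ι → ℝ) (θ : Fin S → ℝ) (c : ℝ)
    (hg : ∀ i, g i = ∑ s, e i s * θ s + c)
    (ξ : ι → ℝ) (hξ : ∀ i, ξ i = ∑ s, e i s)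
    (hP1 : 0 < ∑ i ∈ Finset.univ.filter (fun i => ξ i = 1), p i)
    (hP0 : 0 < ∑ i ∈ Finset.univ.filter (fun i => e i = 0), p i) :
    (∑ i ∈ Finset.univ.filter (fun i => ξ i = 1), p i * g i) /
        (∑ i ∈ Finset.univ.filter (fun i => ξ i = 1), p i)
      - (∑ i ∈ Finset.univ.filter (fun i => e i = 0), p i * g i) /
        (∑ i ∈ Finset.univ.filter (fun i => e i = 0), p i)
      = ∑ s, ((∑ i ∈ Finset.univ.filter (fun i => ξ i = 1), p i * e i s) /
          (∑ i ∈ Finset.univ.filter (fun i => ξ i = 1), p i)) * θ s := by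
  set A := Finset.univ.filter (fun i => ξ i = 1) with hA
  set B := Finset.univ.filter (fun i => e i = 0) with hB
  have h0 : ∀ i ∈ B, p i * g i = p i * c := by
    intro i hi
    have hi0 : e i = 0 := (Finset.mem_filter.mp hi).2
    rw [hg i]
    simp [hi0]
  have hB0 : (∑ i ∈ B, p i * g i) / (∑ i ∈ B, p i) = c := by
    rw [Finset.sum_congr rfl h0, ← Finset.sum_mul]
    field_simp
  have h1 : ∀ i ∈ A, p i * g i = (∑ s, p i * e i s * θ s) + p i * c := by
    intro i hi
    rw [hg i, mul_add, Finset.mul_sum]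
    congr 1
    exact Finset.sum_congr rfl fun s _ => by ring
  have hA1 : (∑ i ∈ A, p i * g i) =
      (∑ s, (∑ i ∈ A, p i * e i s) * θ s) + (∑ i ∈ A, p i) * c := by
    rw [Finset.sum_congr rfl h1, Finset.sum_add_distrib, Finset.sum_comm,
      Finset.sum_mul]
    congr 1
    exact Finset.sum_congr rfl fun s _ => by rw [Finset.sum_mul]
  rw [hB0, hA1]
  rw [add_div, mul_div_cancel_left₀ c hP1.ne', add_sub_cancel_right,
    Finset.sum_div]
  exact Finset.sum_congr rfl fun s _ => by rw [div_mul_eq_mul_div]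
end

section
/- Let $(\varepsilon_{s,t}(1), \varepsilon_{s,t}(0))' \sim N((\delta, -\delta)', I_2)$ i.i.d. for $s = 1, 2$ with $\delta > 0$, let $Z_t$ be Bernoulli with $P(Z_t = 1) = 1/2$, independent of the potential shocks, and define $\varepsilon_{s,t} = \varepsilon_{s,t}(1)Z_t + \varepsilon_{s,t}(0)(1 - Z_t)$. Then: (i) $E[\varepsilon_{s,t}] = 0$ for $s = 1,2$; (ii) $E[Z_t \varepsilon_{s,t}] = \delta/2 > 0$ for $s = 1,2$ (the same-sign condition holds strictly); but (iii) the monotonicity condition $\varepsilon_{1,t}(0) + \varepsilon_{2,t}(0) \leq \varepsilon_{1,t}(1) + \varepsilon_{2,t}(1)$ almost surely fails, since $\xi_t(0) = \varepsilon_{1,t}(0)+\varepsilon_{2,t}(0) \sim N(-2\delta, 2)$ and $\xi_t(1) = \varepsilon_{1,t}(1)+\varepsilon_{2,t}(1) \sim N(2\delta, 2)$ are independent Gaussians, so $P(\xi_t(0) > \xi_t(1)) > 0$. -/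
open MeasureTheory ProbabilityTheory Real
open scoped NNReal ENNReal


lemma pdf_mul_pdf (a b z x : ℝ) {v w : ℝ≥0} (hv : v ≠ 0) (hw : w ≠ 0) :
    gaussianPDFReal a v x * gaussianPDFReal b w (z - x) =
      gaussianPDFReal (a + b) (v + w) z *
        gaussianPDFReal ((a * w + v * (z - b)) / (v + w)) (v * w / (v + w)) x := by
  have hv' : (0:ℝ) < v := lt_of_le_of_ne v.coe_nonneg (by exact_mod_cast (Ne.symm hv))
  have hw' : (0:ℝ) < w := lt_of_le_of_ne w.coe_nonneg (by exact_mod_cast (Ne.symm hw))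
  have hvw : (0:ℝ) < (v:ℝ) + w := by positivity
  have hu : ((v * w / (v + w) : ℝ≥0) : ℝ) = (v:ℝ) * w / ((v:ℝ) + w) := by push_cast; ring
  simp only [gaussianPDFReal_def, NNReal.coe_add, hu]
  rw [mul_mul_mul_comm, mul_mul_mul_comm ((Real.sqrt (2*π*((v:ℝ)+w)))⁻¹), ← Real.exp_add, ← Real.exp_add]
  congr 1
  · rw [← mul_inv, ← mul_inv, ← Real.sqrt_mul (by positivity), ← Real.sqrt_mul (by positivity)]
    congr 1
    field_simp
  · congr 1
    field_simp
    ring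



lemma lintegral_pdf_conv (a b z : ℝ) {v w : ℝ≥0} (hv : v ≠ 0) (hw : w ≠ 0) :
    ∫⁻ x, gaussianPDF a v x * gaussianPDF b w (z - x) = gaussianPDF (a + b) (v + w) z := by
  have hu : v * w / (v + w) ≠ 0 := by
    positivity
  calc ∫⁻ x, gaussianPDF a v x * gaussianPDF b w (z - x)
      = ∫⁻ x, gaussianPDF (a + b) (v + w) z *
          gaussianPDF ((a * w + v * (z - b)) / (v + w)) (v * w / (v + w)) x := by
        congr 1; funext x
        simp only [gaussianPDF_def]
        rw [← ENNReal.ofReal_mul (gaussianPDFReal_nonneg _ _ _),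
          ← ENNReal.ofReal_mul (gaussianPDFReal_nonneg _ _ _), pdf_mul_pdf a b z x hv hw]
    _ = gaussianPDF (a + b) (v + w) z := by
        rw [lintegral_const_mul _ (measurable_gaussianPDF _ _),
          lintegral_gaussianPDF_eq_one _ hu, mul_one]



lemma gaussian_conv {Ω : Type*} [MeasurableSpace Ω] (μ : Measure Ω) [IsProbabilityMeasure μ]
    {X Y : Ω → ℝ} (hX : Measurable X) (hY : Measurable Y) (hXY : IndepFun X Y μ)
    {a b : ℝ} {v w : ℝ≥0} (hv : v ≠ 0) (hw : w ≠ 0)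
    (hXl : μ.map X = gaussianReal a v) (hYl : μ.map Y = gaussianReal b w) :
    μ.map (fun ω => X ω + Y ω) = gaussianReal (a + b) (v + w) := by
  have hvw : v + w ≠ 0 := by positivity
  have hprod : μ.map (fun ω => (X ω, Y ω)) = (μ.map X).prod (μ.map Y) :=
    (indepFun_iff_map_prod_eq_prod_map_map hX.aemeasurable hY.aemeasurable).mp hXY
  have hmm : μ.map (fun ω => X ω + Y ω)
      = Measure.map (fun p : ℝ × ℝ => p.1 + p.2) ((gaussianReal a v).prod (gaussianReal b w)) := by
    rw [← hXl, ← hYl, ← hprod,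
      Measure.map_map measurable_add (hX.prodMk hY)]
    rfl
  rw [hmm]
  ext s hs
  rw [Measure.map_apply measurable_add hs, Measure.prod_apply (measurable_add hs)]
  set F : ℝ → ℝ≥0∞ := s.indicator 1 with hF
  have hFmeas : Measurable F := measurable_one.indicator hs
  set q : ℝ → ℝ≥0∞ := gaussianPDF b w with hq
  set p : ℝ → ℝ≥0∞ := gaussianPDF a v with hp
  have key : ∀ x : ℝ, (gaussianReal b w) (Prod.mk x ⁻¹' ((fun p : ℝ × ℝ => p.1 + p.2) ⁻¹' s))
      = ∫⁻ z, F z * q (z - x) := by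
    intro x
    have hpre : Prod.mk x ⁻¹' ((fun p : ℝ × ℝ => p.1 + p.2) ⁻¹' s) = (fun y => x + y) ⁻¹' s := rfl
    have hmes : MeasurableSet ((fun y => x + y) ⁻¹' s) := (measurable_const_add x) hs
    rw [hpre, gaussianReal_of_var_ne_zero b hw, withDensity_apply _ hmes,
      ← lintegral_indicator hmes]
    have h1 : ∀ y : ℝ, ((fun y => x + y) ⁻¹' s).indicator q y = F (x + y) * q y := by
      intro y
      by_cases hy : x + y ∈ s
      · rw [Set.indicator_of_mem (by exact hy), hF, Set.indicator_of_mem hy]; simp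
      · rw [Set.indicator_of_notMem (by exact hy), hF, Set.indicator_of_notMem hy]; simp
    simp_rw [← hq, h1]
    have := lintegral_add_right_eq_self (μ := (volume : Measure ℝ)) (fun z => F z * q (z - x)) x
    rw [← this]
    congr 1; funext y
    simp [add_sub_cancel_right, add_comm x y]
  simp_rw [key]
  rw [gaussianReal_of_var_ne_zero a hv]
  have hqm : Measurable q := measurable_gaussianPDF _ _
  have hpm : Measurable p := measurable_gaussianPDF _ _
  have huncur : Measurable (Function.uncurry fun x z => F z * q (z - x)) :=
    (hFmeas.comp measurable_snd).mul (hqm.comp (measurable_snd.sub measurable_fst))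
  have hg : Measurable fun x => ∫⁻ z, F z * q (z - x) := huncur.lintegral_prod_right
  rw [lintegral_withDensity_eq_lintegral_mul _ (measurable_gaussianPDF _ _) hg]
  have swap : ∫⁻ x, (p * fun x => ∫⁻ z, F z * q (z - x)) x
      = ∫⁻ z, ∫⁻ x, p x * (F z * q (z - x)) := by
    simp only [Pi.mul_apply]
    have step1 : ∀ x : ℝ, p x * ∫⁻ z, F z * q (z - x) = ∫⁻ z, p x * (F z * q (z - x)) :=
      fun x => (lintegral_const_mul _
        (hFmeas.mul (hqm.comp (measurable_id.sub measurable_const)))).symm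
    simp_rw [step1]
    exact lintegral_lintegral_swap (((hpm.comp measurable_fst).mul
        ((hFmeas.comp measurable_snd).mul
          (hqm.comp (measurable_snd.sub measurable_fst)))).aemeasurable)
  rw [swap]
  have inner : ∀ z : ℝ, ∫⁻ x, p x * (F z * q (z - x)) = F z * gaussianPDF (a + b) (v + w) z := by
    intro z
    calc ∫⁻ x, p x * (F z * q (z - x)) = ∫⁻ x, F z * (p x * q (z - x)) := by
          congr 1; funext x; ring
      _ = F z * ∫⁻ x, p x * q (z - x) :=
          lintegral_const_mul _ (hpm.mul (hqm.comp (measurable_const.sub measurable_id)))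
      _ = F z * gaussianPDF (a + b) (v + w) z := by rw [lintegral_pdf_conv a b z hv hw]
  simp_rw [inner]
  rw [gaussianReal_apply _ hvw s, ← lintegral_indicator hs]
  congr 1; funext z
  by_cases hz : z ∈ s
  · rw [hF, Set.indicator_of_mem hz, Set.indicator_of_mem hz]; simp
  · rw [hF, Set.indicator_of_notMem hz, Set.indicator_of_notMem hz]; simp


lemma integral_x_exp (b : ℝ) (hb : 0 < b) : ∫ x : ℝ, x * rexp (-b * x ^ 2) = 0 := by
  have h := integral_neg_eq_self (fun x : ℝ => x * rexp (-b * x ^ 2)) (volume : Measure ℝ)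
  simp only [neg_mul, neg_sq, neg_neg] at h
  have h' : ∫ x : ℝ, -(x * rexp (-b * x ^ 2)) = ∫ x : ℝ, x * rexp (-b * x ^ 2) := by
    simpa [neg_mul] using h
  rw [integral_neg] at h'
  linarith

lemma integrable_x_exp (b : ℝ) (hb : 0 < b) :
    Integrable (fun x : ℝ => x * rexp (-b * x ^ 2)) := by
  have := integrable_rpow_mul_exp_neg_mul_sq hb (s := 1) (by norm_num)
  simpa [Real.rpow_one] using this

lemma integral_mul_gaussianPDFReal (m : ℝ) {v : ℝ≥0} (hv : v ≠ 0) :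
    ∫ x : ℝ, gaussianPDFReal m v x * x = m := by
  have hv' : (0:ℝ) < v := lt_of_le_of_ne v.coe_nonneg (by exact_mod_cast (Ne.symm hv))
  have hb : (0:ℝ) < (2 * (v:ℝ))⁻¹ := by positivity
  have hshift := integral_add_right_eq_self (μ := (volume : Measure ℝ))
    (fun x => gaussianPDFReal m v x * x) m
  rw [← hshift]
  have heq : ∀ x : ℝ, gaussianPDFReal m v (x + m) * (x + m)
      = (Real.sqrt (2 * π * v))⁻¹ * (x * rexp (-(2 * (v:ℝ))⁻¹ * x ^ 2))
        + m * gaussianPDFReal 0 v x := by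
    intro x
    simp only [gaussianPDFReal_def]
    rw [add_sub_cancel_right]
    have : -x ^ 2 / (2 * (v:ℝ)) = -(2 * (v:ℝ))⁻¹ * x ^ 2 := by field_simp
    rw [show x - 0 = x by ring, this]
    ring
  simp_rw [heq]
  rw [integral_add (((integrable_x_exp _ hb).const_mul _))
    ((integrable_gaussianPDFReal 0 v).const_mul m),
    integral_const_mul, integral_const_mul, integral_x_exp _ hb,
    integral_gaussianPDFReal_eq_one 0 hv]
  ring

lemma integrable_id_gaussianReal (m : ℝ) (v : ℝ≥0) :
    Integrable (fun x => x) (gaussianReal m v) := by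
  by_cases hv : v = 0
  · rw [hv, gaussianReal_zero_var]
    exact (integrable_const m).congr (ae_eq_dirac (fun x : ℝ => x)).symm
  have hv' : (0:ℝ) < v := lt_of_le_of_ne v.coe_nonneg (by exact_mod_cast (Ne.symm hv))
  have hb : (0:ℝ) < (2 * (v:ℝ))⁻¹ := by positivity
  rw [gaussianReal_of_var_ne_zero m hv, gaussianPDF_def]
  rw [integrable_withDensity_iff (measurable_gaussianPDFReal m v).ennreal_ofReal
    (Filter.Eventually.of_forall fun x => ENNReal.ofReal_lt_top)]
  have : ∀ x : ℝ, x * (ENNReal.ofReal (gaussianPDFReal m v x)).toReal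
      = gaussianPDFReal m v x * x := by
    intro x
    rw [ENNReal.toReal_ofReal (gaussianPDFReal_nonneg m v x)]
    ring
  simp_rw [this]
  -- integrability of pdf * x
  have heq : ∀ x : ℝ, gaussianPDFReal m v x * x
      = (Real.sqrt (2 * π * v))⁻¹ * (((x - m) * rexp (-(2 * (v:ℝ))⁻¹ * (x - m) ^ 2))
        + m * rexp (-(2 * (v:ℝ))⁻¹ * (x - m) ^ 2)) := by
    intro x
    simp only [gaussianPDFReal_def]
    have : -(x - m) ^ 2 / (2 * (v:ℝ)) = -(2 * (v:ℝ))⁻¹ * (x - m) ^ 2 := by field_simp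
    rw [this]
    ring
  simp_rw [heq]
  apply Integrable.const_mul
  apply Integrable.add
  · exact ((integrable_x_exp _ hb).comp_sub_right m)
  · exact (((integrable_exp_neg_mul_sq hb).comp_sub_right m).const_mul m)

lemma integral_id_gaussianReal (m : ℝ) {v : ℝ≥0} (hv : v ≠ 0) :
    ∫ x, x ∂(gaussianReal m v) = m := by
  rw [gaussianReal_of_var_ne_zero m hv, gaussianPDF_def]
  have : (volume : Measure ℝ).withDensity (fun x => ENNReal.ofReal (gaussianPDFReal m v x))
      = (volume : Measure ℝ).withDensity
        (fun x => ((gaussianPDFReal m v x).toNNReal : ℝ≥0∞)) := rfl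
  rw [this, integral_withDensity_eq_integral_smul
    (measurable_gaussianPDFReal m v).real_toNNReal _]
  have : ∀ x : ℝ, (gaussianPDFReal m v x).toNNReal • x = gaussianPDFReal m v x * x := by
    intro x
    rw [NNReal.smul_def, smul_eq_mul, Real.coe_toNNReal _ (gaussianPDFReal_nonneg m v x)]
  simp_rw [this]
  exact integral_mul_gaussianPDFReal m hv


lemma gaussianReal_Ioi_pos (m : ℝ) {v : ℝ≥0} (hv : v ≠ 0) :
    0 < gaussianReal m v (Set.Ioi 0) := by
  rw [gaussianReal_apply m hv]
  rw [pos_iff_ne_zero]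
  intro h
  rw [← lintegral_indicator measurableSet_Ioi] at h
  rw [lintegral_eq_zero_iff ((measurable_gaussianPDF m v).indicator measurableSet_Ioi)] at h
  have : ∀ᵐ x : ℝ, x ∈ Set.Ioi (0:ℝ) → gaussianPDF m v x = 0 := by
    filter_upwards [h] with x hx hmem
    simpa [Set.indicator_of_mem hmem] using hx
  have h2 : ∀ᵐ x : ℝ, x ∉ Set.Ioi (0:ℝ) := by
    filter_upwards [this] with x hx
    intro hmem
    exact absurd (hx hmem) (gaussianPDF_pos m hv x).ne'
  have h3 : (volume : Measure ℝ) (Set.Ioi (0:ℝ)) = 0 := by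
    have := ae_iff.mp h2
    simpa [Set.Ioi] using this
  rw [Real.volume_Ioi] at h3
  exact ENNReal.top_ne_zero h3


theorem stmt6 {Ω : Type*} [MeasurableSpace Ω] (μ : Measure Ω) [IsProbabilityMeasure μ]
    (δ : ℝ) (hδ : 0 < δ)
    (ε : Fin 2 → Bool → Ω → ℝ) (Z : Ω → ℝ)
    (hmeas : ∀ s b, Measurable (ε s b)) (hZmeas : Measurable Z)
    (hZ01 : ∀ ω, Z ω = 0 ∨ Z ω = 1)
    (hZlaw : μ {ω | Z ω = 1} = 1/2)
    (hlaw1 : ∀ s, Measure.map (ε s true) μ = gaussianReal δ 1)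
    (hlaw0 : ∀ s, Measure.map (ε s false) μ = gaussianReal (-δ) 1)
    (hindep : iIndepFun
      (fun i : Option (Fin 2 × Bool) => Option.elim i Z (fun sb => ε sb.1 sb.2)) μ) :
    (∀ s, ∫ ω, (ε s true ω * Z ω + ε s false ω * (1 - Z ω)) ∂μ = 0) ∧
    (∀ s, (∫ ω, Z ω * (ε s true ω * Z ω + ε s false ω * (1 - Z ω)) ∂μ = δ/2) ∧ 0 < δ/2) ∧
    (Measure.map (fun ω => ε 0 false ω + ε 1 false ω) μ = gaussianReal (-(2*δ)) 2 ∧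
     Measure.map (fun ω => ε 0 true ω + ε 1 true ω) μ = gaussianReal (2*δ) 2 ∧
     0 < μ {ω | ε 0 true ω + ε 1 true ω < ε 0 false ω + ε 1 false ω}) := by
  set f : Option (Fin 2 × Bool) → Ω → ℝ :=
    fun i => Option.elim i Z (fun sb => ε sb.1 sb.2) with hf
  have hfmeas : ∀ i, Measurable (f i) := by
    rintro (_ | ⟨s, b⟩)
    · exact hZmeas
    · exact hmeas s b
  -- integrability of the epsilons
  have hInt : ∀ s b, Integrable (ε s b) μ := by
    intro s b
    have h1 : Integrable (fun x : ℝ => x) (μ.map (ε s b)) := by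
      cases b
      · rw [hlaw0 s]; exact integrable_id_gaussianReal _ _
      · rw [hlaw1 s]; exact integrable_id_gaussianReal _ _
    exact (integrable_map_measure aestronglyMeasurable_id
      (hmeas s b).aemeasurable).mp h1
  have hEtrue : ∀ s, ∫ ω, ε s true ω ∂μ = δ := by
    intro s
    have h := integral_id_gaussianReal δ (one_ne_zero (α := ℝ≥0))
    rw [← hlaw1 s, integral_map (f := fun x : ℝ => x) (hmeas s true).aemeasurable aestronglyMeasurable_id] at h
    simpa using h
  have hEfalse : ∀ s, ∫ ω, ε s false ω ∂μ = -δ := by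
    intro s
    have h := integral_id_gaussianReal (-δ) (one_ne_zero (α := ℝ≥0))
    rw [← hlaw0 s, integral_map (f := fun x : ℝ => x) (hmeas s false).aemeasurable aestronglyMeasurable_id] at h
    simpa using h
  -- facts about Z
  have hZbdd : ∀ ω, ‖Z ω‖ ≤ 1 := by
    intro ω; rcases hZ01 ω with h | h <;> simp [h]
  have hZint : Integrable Z μ :=
    Integrable.mono' (integrable_const 1) hZmeas.aestronglyMeasurable
      (Filter.Eventually.of_forall hZbdd)
  have hZval : ∫ ω, Z ω ∂μ = 1/2 := by
    have hset : MeasurableSet {ω | Z ω = 1} := hZmeas (measurableSet_singleton 1)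
    have hZind : Z = Set.indicator {ω | Z ω = 1} (fun _ => (1:ℝ)) := by
      funext ω
      rcases hZ01 ω with h | h
      · rw [h, Set.indicator_of_notMem (by simp [h])]
      · rw [h, Set.indicator_of_mem (by simpa using h)]
    rw [hZind, integral_indicator_const (1:ℝ) hset, measureReal_def, hZlaw]
    norm_num
  -- independence facts
  have hIZ : ∀ s b, IndepFun (ε s b) Z μ := by
    intro s b
    exact hindep.indepFun (i := some (s, b)) (j := none) (by simp)
  -- product integrals
  have hmulZ : ∀ s, ∫ ω, ε s true ω * Z ω ∂μ = δ * (1/2) := by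
    intro s
    have h := (hIZ s true).integral_mul_eq_mul_integral (hInt s true).1 hZint.1
    rw [hEtrue s, hZval] at h
    simpa [Pi.mul_apply] using h
  have hI1Z : ∀ s, IndepFun (ε s false) (fun ω => 1 - Z ω) μ := by
    intro s
    exact (hIZ s false).comp measurable_id (measurable_const.sub measurable_id)
  have h1Zint : Integrable (fun ω => 1 - Z ω) μ := (integrable_const 1).sub hZint
  have h1Zval : ∫ ω, (1 - Z ω) ∂μ = 1/2 := by
    rw [integral_sub (integrable_const 1) hZint, hZval, integral_const]
    simp
    norm_num
  have hmul1Z : ∀ s, ∫ ω, ε s false ω * (1 - Z ω) ∂μ = -δ * (1/2) := by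
    intro s
    have h := (hI1Z s).integral_mul_eq_mul_integral (hInt s false).1 h1Zint.1
    rw [hEfalse s, h1Zval] at h
    simpa [Pi.mul_apply] using h
  -- integrability of products
  have hP1 : ∀ s, Integrable (fun ω => ε s true ω * Z ω) μ := by
    intro s
    have : (fun ω => ε s true ω * Z ω) = fun ω => Z ω * ε s true ω := by funext ω; ring
    rw [this]
    exact (hInt s true).bdd_mul hZmeas.aestronglyMeasurable
      (Filter.Eventually.of_forall hZbdd)
  have hP0 : ∀ s, Integrable (fun ω => ε s false ω * (1 - Z ω)) μ := by
    intro s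
    have : (fun ω => ε s false ω * (1 - Z ω)) = fun ω => (1 - Z ω) * ε s false ω := by
      funext ω; ring
    rw [this]
    refine (hInt s false).bdd_mul (c := 1)
      (measurable_const.sub hZmeas).aestronglyMeasurable
      (Filter.Eventually.of_forall fun ω => ?_)
    rcases hZ01 ω with h | h <;> simp [h]
  refine ⟨?_, ?_, ?_⟩
  · -- part (i)
    intro s
    rw [integral_add (hP1 s) (hP0 s), hmulZ s, hmul1Z s]
    ring
  · -- part (ii)
    intro s
    refine ⟨?_, by linarith⟩
    have hcongr : ∀ ω, Z ω * (ε s true ω * Z ω + ε s false ω * (1 - Z ω))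
        = ε s true ω * Z ω := by
      intro ω
      rcases hZ01 ω with h | h <;> simp [h]
    rw [integral_congr_ae (Filter.Eventually.of_forall hcongr), hmulZ s]
    ring
  · -- part (iii)
    have hne : ∀ (s t : Fin 2) (b c : Bool), (s, b) ≠ (t, c) →
        (some (s, b) : Option (Fin 2 × Bool)) ≠ some (t, c) := by
      intro s t b c h hc
      exact h (Option.some_injective _ hc)
    have hIff : IndepFun (ε 0 false) (ε 1 false) μ :=
      hindep.indepFun (i := some (0, false)) (j := some (1, false)) (by simp)
    have hItt : IndepFun (ε 0 true) (ε 1 true) μ :=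
      hindep.indepFun (i := some (0, true)) (j := some (1, true)) (by simp)
    have hlawF : Measure.map (fun ω => ε 0 false ω + ε 1 false ω) μ
        = gaussianReal (-(2*δ)) 2 := by
      rw [show -(2*δ) = -δ + -δ by ring, show (2 : ℝ≥0) = 1 + 1 by norm_num]
      exact gaussian_conv μ (hmeas 0 false) (hmeas 1 false) hIff one_ne_zero one_ne_zero
        (hlaw0 0) (hlaw0 1)
    have hlawT : Measure.map (fun ω => ε 0 true ω + ε 1 true ω) μ
        = gaussianReal (2*δ) 2 := by
      rw [show 2*δ = δ + δ by ring, show (2 : ℝ≥0) = 1 + 1 by norm_num]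
      exact gaussian_conv μ (hmeas 0 true) (hmeas 1 true) hItt one_ne_zero one_ne_zero
        (hlaw1 0) (hlaw1 1)
    refine ⟨hlawF, hlawT, ?_⟩
    set X : Ω → ℝ := fun ω => ε 0 true ω + ε 1 true ω with hX
    set Y : Ω → ℝ := fun ω => ε 0 false ω + ε 1 false ω with hY
    have hXmeas : Measurable X := (hmeas 0 true).add (hmeas 1 true)
    have hYmeas : Measurable Y := (hmeas 0 false).add (hmeas 1 false)
    have hXYindep : IndepFun X Y μ := by
      have := hindep.indepFun_add_add hfmeas (some (0, true)) (some (1, true))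
        (some (0, false)) (some (1, false))
        (hne _ _ _ _ (by simp)) (hne _ _ _ _ (by simp))
        (hne _ _ _ _ (by simp)) (hne _ _ _ _ (by simp))
      exact this
    -- law of -X
    have hnegX : Measure.map (fun ω => -X ω) μ = gaussianReal (-(2*δ)) 2 := by
      have h1 : Measure.map (fun ω => -X ω) μ
          = Measure.map ((fun x : ℝ => -1 * x) ∘ X) μ := by
        congr 1
        funext ω
        simp
      rw [h1, ← Measure.map_map (show Measurable (fun x : ℝ => -1 * x) by fun_prop) hXmeas, hlawT,
        gaussianReal_map_const_mul (-1)]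
      congr 1
      · ring
      · ext
        norm_num
    have hIYnX : IndepFun Y (fun ω => -X ω) μ :=
      hXYindep.symm.comp measurable_id measurable_neg
    have hD : Measure.map (fun ω => Y ω + -X ω) μ
        = gaussianReal (-(2*δ) + -(2*δ)) (2 + 2) :=
      gaussian_conv μ hYmeas hXmeas.neg hIYnX two_ne_zero two_ne_zero hlawF hnegX
    have hset : {ω | ε 0 true ω + ε 1 true ω < ε 0 false ω + ε 1 false ω}
        = (fun ω => Y ω + -X ω) ⁻¹' Set.Ioi 0 := by
      ext ω
      simp only [Set.mem_setOf_eq, Set.mem_preimage, Set.mem_Ioi, hX, hY]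
      constructor <;> intro h <;> linarith
    rw [hset, ← Measure.map_apply (f := fun ω => Y ω + -X ω) (hYmeas.add hXmeas.neg) measurableSet_Ioi, hD]
    exact gaussianReal_Ioi_pos _ (by norm_num)
end

section
/- Let $\boldsymbol{Z}_t$ be an $S \times 1$ random vector and $\boldsymbol{X}_t = (x_{1,t},\dots,x_{S,t})'$ with $\mathrm{Cov}(x_{s,t}, \boldsymbol{Z}_t) = \boldsymbol{\lambda}_s \in \mathbb{R}^S$ for each $s$, and suppose $\mathrm{Cov}(y_{t+h}, \boldsymbol{Z}_t) = \sum_{s=1}^S \boldsymbol{\lambda}_s \theta_{h,ys}$ for a vector $\boldsymbol{\theta}_{h,y} = (\theta_{h,y1},\dots,\theta_{h,yS})'$. If $\mathrm{Cov}(\boldsymbol{Z}_t, \boldsymbol{X}_t')$ has rank $S$ (hence is invertible), then $\boldsymbol{\theta}_{h,y} = \mathrm{Cov}(\boldsymbol{Z}_t, \boldsymbol{X}_t')^{-1} \mathrm{Cov}(y_{t+h}, \boldsymbol{Z}_t)$; i.e., the componentwise impulse responses are point-identified. -/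
open MeasureTheory

theorem stmt7 {Ω : Type*} [MeasurableSpace Ω] (μ : Measure Ω) [IsProbabilityMeasure μ]
    (S : ℕ) (Z X : Fin S → Ω → ℝ) (y : Ω → ℝ)
    (lam : Fin S → Fin S → ℝ) (θ : Fin S → ℝ)
    (hlam : ∀ s i, ∫ ω, X s ω * Z i ω ∂μ = lam s i)
    (hy : ∀ i, ∫ ω, y ω * Z i ω ∂μ = ∑ s, lam s i * θ s)
    (C : Matrix (Fin S) (Fin S) ℝ)
    (hC : ∀ i s, C i s = ∫ ω, X s ω * Z i ω ∂μ)
    (hrank : C.rank = S) :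
    θ = C⁻¹.mulVec (fun i => ∫ ω, y ω * Z i ω ∂μ) := by
  -- C is invertible
  have hsurj : Function.Surjective C.mulVecLin := by
    rw [← LinearMap.range_eq_top]
    apply Submodule.eq_top_of_finrank_eq
    simpa [Matrix.rank] using hrank
  have hbij : Function.Bijective C.mulVecLin :=
    ⟨(LinearMap.injective_iff_surjective).mpr hsurj, hsurj⟩
  have hunitEnd : IsUnit (Matrix.toLinAlgEquiv' C : Module.End ℝ (Fin S → ℝ)) := by
    rw [Module.End.isUnit_iff]
    exact hbij
  have hunit : IsUnit C := by
    have := hunitEnd.map (Matrix.toLinAlgEquiv' (R := ℝ) (n := Fin S)).symm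
    simpa using this
  have hdet : IsUnit C.det := (Matrix.isUnit_iff_isUnit_det C).mp hunit
  have hmul : C.mulVec θ = fun i => ∫ ω, y ω * Z i ω ∂μ := by
    funext i
    rw [hy i]
    simp only [Matrix.mulVec, dotProduct]
    congr 1; funext s
    rw [hC i s, hlam s i]
  rw [← hmul, Matrix.mulVec_mulVec, Matrix.nonsing_inv_mul C hdet, Matrix.one_mulVec]
end

section
/- Suppose $\mathrm{Cov}(\widetilde{y}_{t+h}, z_t) = \sum_{s=1}^S \alpha_s \widetilde{\theta}_{h,ys}$ and $\mathrm{Cov}(\widetilde{x}_{t+h}, z_t) = \sum_{s=1}^S \alpha_s \widetilde{\theta}_{h,xs}$ with $\sum_{s=1}^S \alpha_s\widetilde{\theta}_{h,xs} \neq 0$ and $\widetilde{\theta}_{h,xs} \neq 0$ for all $s$. Then $\frac{\mathrm{Cov}(\widetilde{y}_{t+h}, z_t)}{\mathrm{Cov}(\widetilde{x}_{t+h}, z_t)} = \sum_{s=1}^S \left(\frac{\alpha_s \widetilde{\theta}_{h,xs}}{\sum_{s'=1}^S \alpha_{s'}\widetilde{\theta}_{h,xs'}}\right) \frac{\widetilde{\theta}_{h,ys}}{\widetilde{\theta}_{h,xs}}$,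 an affine combination (weights summing to one) of the relative cumulative impulse responses $\widetilde{\theta}_{h,ys}/\widetilde{\theta}_{h,xs}$. -/
open MeasureTheory

theorem stmt17 {Ω : Type*} [MeasurableSpace Ω] (μ : Measure Ω) [IsProbabilityMeasure μ]
    (S : ℕ) (α θy θx : Fin S → ℝ)
    (hθx : ∀ s, θx s ≠ 0) (hden : ∑ s, α s * θx s ≠ 0)
    (yt xt zt : Ω → ℝ)
    (hcy : ∫ ω, yt ω * zt ω ∂μ = ∑ s, α s * θy s)
    (hcx : ∫ ω, xt ω * zt ω ∂μ = ∑ s, α s * θx s) :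
    ((∫ ω, yt ω * zt ω ∂μ) / (∫ ω, xt ω * zt ω ∂μ)
      = ∑ s, (α s * θx s / ∑ s', α s' * θx s') * (θy s / θx s)) ∧
    (∑ s, α s * θx s / ∑ s', α s' * θx s') = 1 := by
  constructor
  · rw [hcy, hcx]
    have : ∀ s : Fin S, (α s * θx s / ∑ s', α s' * θx s') * (θy s / θx s)
        = α s * θy s / ∑ s', α s' * θx s' := by
      intro s
      rw [div_mul_div_comm, mul_comm (∑ s', α s' * θx s') (θx s),
        show α s * θx s * θy s = θx s * (α s * θy s) from by ring,
        mul_div_mul_left _ _ (hθx s)]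
    rw [Finset.sum_congr rfl (fun s _ => this s), ← Finset.sum_div]
  · rw [← Finset.sum_div, div_self hden]
end
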